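/- Let Ω = {X ∈ ℝ^{n×n} : X ≥ 0 entrywise, Xe = e} (the row-stochastic matrices) and let X̄ ∈ Ω with rank(X̄) ≤ r. Suppose H = y·eᵀ − H¹ where y ∈ ℝⁿ, H¹ ∈ N_{ℝ_+^{n×n}}(X̄) (so H¹ ≤ 0 entrywise and ⟨H¹, X̄⟩ = 0), and H ∈ N_{Λ_r}(X̄) so that ⟨H, X̄⟩ = 0 and H·X̄ᵀ = 0. Then H = 0. -/

import Mathlib

attribute [local instance] Matrix.frobeniusNormedAddCommGroup

/-- The trace (Frobenius) inner product of two real square matrices. -/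
def minner {n : ℕ} (A B : Matrix (Fin n) (Fin n) ℝ) : ℝ :=
  ∑ i, ∑ j, A i j * B i j

/-- The Fréchet (regular) normal cone to `S` at `x`. -/
def frechetNormalCone {n : ℕ} (S : Set (Matrix (Fin n) (Fin n) ℝ))
    (x : Matrix (Fin n) (Fin n) ℝ) : Set (Matrix (Fin n) (Fin n) ℝ) :=
  {v | ∀ ε > (0:ℝ), ∃ δ > (0:ℝ), ∀ y ∈ S, dist y x < δ →
    minner v (y - x) ≤ ε * dist y x}

/-- The limiting (Mordukhovich) normal cone to `S` at `x`. -/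
def limitingNormalCone {n : ℕ} (S : Set (Matrix (Fin n) (Fin n) ℝ))
    (x : Matrix (Fin n) (Fin n) ℝ) : Set (Matrix (Fin n) (Fin n) ℝ) :=
  {v | ∃ xs vs : ℕ → Matrix (Fin n) (Fin n) ℝ,
    (∀ k, xs k ∈ S) ∧ Filter.Tendsto xs Filter.atTop (nhds x) ∧
    Filter.Tendsto vs Filter.atTop (nhds v) ∧
    ∀ k, vs k ∈ frechetNormalCone S (xs k)}

/-!
Moving from `Z` in the directions `E * Z` and `Z * E` never increases the rank, so every Fréchet
normal to the rank variety at `Z`, and by continuity every limiting normal `H` at `X̄`, satisfies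
`H * X̄ᵀ = 0` and `X̄ᵀ * H = 0`. Since the rows of `X̄` sum to one and `H¹` vanishes on the support
of `X̄`, the diagonal of `H * X̄ᵀ` is `y`, so `y = 0`. Then `eᵀ H¹ = eᵀ X̄ᵀ H¹ = 0`, and `H¹ ≤ 0`
forces `H¹ = 0`.
-/

open Matrix Filter Topology

attribute [local instance] Matrix.frobeniusNormedSpace

section NormalCone

variable {n : ℕ}

lemma minner_smul_right (A B : Matrix (Fin n) (Fin n) ℝ) (t : ℝ) :
    minner A (t • B) = t * minner A B := by
  simp only [minner, Finset.mul_sum, Matrix.smul_apply, smul_eq_mul, mul_left_comm]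

lemma minner_neg_right (A B : Matrix (Fin n) (Fin n) ℝ) :
    minner A (-B) = -minner A B := by
  simp only [minner, Matrix.neg_apply, mul_neg, Finset.sum_neg_distrib]

lemma continuous_minner :
    Continuous fun p : Matrix (Fin n) (Fin n) ℝ × Matrix (Fin n) (Fin n) ℝ => minner p.1 p.2 := by
  unfold minner
  fun_prop

lemma minner_single_mul (v x : Matrix (Fin n) (Fin n) ℝ) (i j : Fin n) :
    minner v (single i j 1 * x) = (v * xᵀ) i j := by
  simp [minner, mul_apply, single_apply, ite_and, mul_comm]

lemma minner_mul_single (v x : Matrix (Fin n) (Fin n) ℝ) (i j : Fin n) :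
    minner v (x * single i j 1) = (xᵀ * v) i j := by
  simp [minner, mul_apply, single_apply, ite_and, mul_comm]

lemma minner_nonpos_of_mem_frechetNormalCone {S : Set (Matrix (Fin n) (Fin n) ℝ)}
    {x v D : Matrix (Fin n) (Fin n) ℝ} (hv : v ∈ frechetNormalCone S x)
    (hD : ∀ t : ℝ, 0 < t → x + t • D ∈ S) :
    minner v D ≤ 0 := by
  refine le_of_forall_pos_le_add fun ε hε => ?_
  obtain ⟨δ, hδ, hvδ⟩ := hv (ε / (‖D‖ + 1)) (by positivity)
  set t := δ / (2 * (‖D‖ + 1))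
  have ht : 0 < t := by positivity
  have hdist : dist (x + t • D) x = t * ‖D‖ := by
    rw [dist_eq_norm, add_sub_cancel_left, norm_smul, Real.norm_of_nonneg ht.le]
  have hclose : t * ‖D‖ < δ := by
    have : t * (‖D‖ + 1) = δ / 2 := by simp only [t]; field_simp
    nlinarith
  have hstep := hvδ _ (hD t ht) (hdist ▸ hclose)
  rw [add_sub_cancel_left, minner_smul_right, hdist, mul_left_comm] at hstep
  calc minner v D ≤ ε / (‖D‖ + 1) * ‖D‖ := le_of_mul_le_mul_left hstep ht
    _ ≤ 0 + ε := by
      rw [zero_add, div_mul_eq_mul_div, div_le_iff₀ (by positivity)]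
      nlinarith

lemma minner_eq_zero_of_mem_frechetNormalCone {S : Set (Matrix (Fin n) (Fin n) ℝ)}
    {x v D : Matrix (Fin n) (Fin n) ℝ} (hv : v ∈ frechetNormalCone S x)
    (hD : ∀ t : ℝ, x + t • D ∈ S) :
    minner v D = 0 := by
  have hle := minner_nonpos_of_mem_frechetNormalCone hv fun t _ => hD t
  have hge := minner_nonpos_of_mem_frechetNormalCone (D := -D) hv fun t _ => by
    simpa [smul_neg] using hD (-t)
  rw [minner_neg_right] at hge
  linarith

lemma minner_eq_zero_of_mem_limitingNormalCone {S : Set (Matrix (Fin n) (Fin n) ℝ)}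
    {x v : Matrix (Fin n) (Fin n) ℝ} (hv : v ∈ limitingNormalCone S x)
    {f : Matrix (Fin n) (Fin n) ℝ → Matrix (Fin n) (Fin n) ℝ} (hf : Continuous f)
    (hS : ∀ z ∈ S, ∀ t : ℝ, z + t • f z ∈ S) :
    minner v (f x) = 0 := by
  obtain ⟨xs, vs, hxsS, hxs, hvs, hfre⟩ := hv
  have h1 : Tendsto (fun k => (vs k, f (xs k))) atTop (𝓝 (v, f x)) :=
    hvs.prodMk_nhds ((hf.tendsto x).comp hxs)
  have hlim := (continuous_minner.tendsto (v, f x)).comp h1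
  have hzero : ∀ k, minner (vs k) (f (xs k)) = 0 := fun k =>
    minner_eq_zero_of_mem_frechetNormalCone (hfre k) (hS _ (hxsS k))
  exact tendsto_nhds_unique hlim (tendsto_const_nhds.congr fun k => (hzero k).symm)

lemma mul_transpose_eq_zero_of_mem_limitingNormalCone_rank_le {r : ℕ}
    {x v : Matrix (Fin n) (Fin n) ℝ}
    (hv : v ∈ limitingNormalCone {Z : Matrix (Fin n) (Fin n) ℝ | Z.rank ≤ r} x) :
    v * xᵀ = 0 := by
  ext i j
  rw [← minner_single_mul]
  refine minner_eq_zero_of_mem_limitingNormalCone hv (continuous_const.matrix_mul continuous_id)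
    fun z hz t => ?_
  have hfactor : z + t • (single i j 1 * z) = (1 + t • single i j 1) * z := by
    rw [add_mul, one_mul, smul_mul]
  exact hfactor ▸ (rank_mul_le_right _ _).trans hz

lemma transpose_mul_eq_zero_of_mem_limitingNormalCone_rank_le {r : ℕ}
    {x v : Matrix (Fin n) (Fin n) ℝ}
    (hv : v ∈ limitingNormalCone {Z : Matrix (Fin n) (Fin n) ℝ | Z.rank ≤ r} x) :
    xᵀ * v = 0 := by
  ext i j
  rw [← minner_mul_single]
  refine minner_eq_zero_of_mem_limitingNormalCone hv (continuous_id.matrix_mul continuous_const)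
    fun z hz t => ?_
  have hfactor : z + t • (z * single i j 1) = z * (1 + t • single i j 1) := by
    rw [mul_add, mul_one, Matrix.mul_smul]
  exact hfactor ▸ (rank_mul_le_left _ _).trans hz

lemma eq_zero_of_nonpos_of_one_vecMul_eq_zero {m k : Type*} [Fintype m] {M : Matrix m k ℝ}
    (hM : ∀ i j, M i j ≤ 0) (hcol : 1 ᵥ* M = 0) : M = 0 := by
  ext i j
  have hsum : ∑ a, M a j = 0 := by simpa [vecMul, dotProduct] using congrFun hcol j
  exact (Finset.sum_eq_zero_iff_of_nonpos fun a _ => hM a j).mp hsum i (Finset.mem_univ i)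

end NormalCone

theorem stmt12_general (n r : ℕ) (Xbar : Matrix (Fin n) (Fin n) ℝ)
    (hpos : ∀ i j, 0 ≤ Xbar i j)
    (hrowsum : Xbar.mulVec (fun _ => (1:ℝ)) = fun _ => (1:ℝ))
    (y : Fin n → ℝ) (H1 : Matrix (Fin n) (Fin n) ℝ)
    (hH1neg : ∀ i j, H1 i j ≤ 0)
    (hH1comp : ∀ i j, 0 < Xbar i j → H1 i j = 0)
    (hH : (Matrix.of fun i _ => y i) - H1 ∈
      limitingNormalCone {Z : Matrix (Fin n) (Fin n) ℝ | Z.rank ≤ r} Xbar) :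
    (Matrix.of fun i _ => y i) - H1 = 0 := by
  set H : Matrix (Fin n) (Fin n) ℝ := (Matrix.of fun i _ => y i) - H1 with hHdef
  have hcomp : ∀ i j, H1 i j * Xbar i j = 0 := fun i j =>
    (hpos i j).eq_or_lt.elim (fun h => by rw [← h, mul_zero])
      fun h => by rw [hH1comp i j h, zero_mul]
  have hy : y = 0 := funext fun i => by
    calc y i = y i * (Xbar *ᵥ fun _ => 1) i - ∑ b, H1 i b * Xbar i b := by
          simp [hrowsum, hcomp]
      _ = (H * Xbarᵀ) i i := by
          simp [hHdef, mul_apply, mulVec, dotProduct, sub_mul, Finset.mul_sum]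
      _ = 0 := by rw [mul_transpose_eq_zero_of_mem_limitingNormalCone_rank_le hH, Matrix.zero_apply]
  have hH_eq : H = -H1 := by rw [hHdef, hy]; ext i j; simp
  have hXH1 : Xbarᵀ * H1 = 0 := by
    rw [← neg_eq_zero, ← Matrix.mul_neg, ← hH_eq]
    exact transpose_mul_eq_zero_of_mem_limitingNormalCone_rank_le hH
  have hH1 : H1 = 0 := by
    refine eq_zero_of_nonpos_of_one_vecMul_eq_zero hH1neg ?_
    calc 1 ᵥ* H1 = (Xbar *ᵥ fun _ => 1) ᵥ* H1 := by rw [hrowsum]; rfl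
      _ = 1 ᵥ* (Xbarᵀ * H1) := by rw [← vecMul_transpose, vecMul_vecMul]; rfl
      _ = 0 := by rw [hXH1, vecMul_zero]
  rw [hH_eq, hH1, neg_zero]

/-- let `X̄` be a row-stochastic matrix (entrywise nonnegative with
`X̄ e = e`) of rank at most `r`. Suppose `H = y·eᵀ − H¹`, where `H¹` belongs to the
normal cone of the nonnegative orthant at `X̄` (`H¹ ≤ 0` entrywise and `H¹ᵢⱼ = 0`
whenever `X̄ᵢⱼ > 0`), and `H ∈ N_{Λ_r}(X̄)`. Then `H = 0`. -/
theorem stmt12 (n r : ℕ) (Xbar : Matrix (Fin n) (Fin n) ℝ)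
    (hpos : ∀ i j, 0 ≤ Xbar i j)
    (hrowsum : Xbar.mulVec (fun _ => (1:ℝ)) = fun _ => (1:ℝ))
    (hrank : Xbar.rank ≤ r)
    (y : Fin n → ℝ) (H1 : Matrix (Fin n) (Fin n) ℝ)
    (hH1neg : ∀ i j, H1 i j ≤ 0)
    (hH1comp : ∀ i j, 0 < Xbar i j → H1 i j = 0)
    (hH : (Matrix.of fun i _ => y i) - H1 ∈
      limitingNormalCone {Z : Matrix (Fin n) (Fin n) ℝ | Z.rank ≤ r} Xbar) :
    (Matrix.of fun i _ => y i) - H1 = 0 :=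
  stmt12_general n r Xbar hpos hrowsum y H1 hH1neg hH1comp hH
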